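/- arXiv:2410.19078 — 3 statements merged into one kernel-verified Lean document; each statement's English description precedes it below -/
import Mathlib

section
/- Every totally even subset A of the edges of T_n is symmetric about the middle: {(x₁,y₁),(x₂,y₂)} ∈ A if and only if {(n+3−y₁−x₁, y₁),(n+3−y₂−x₂, y₂)} ∈ A. -/
/-! Triangular grid `Tₙ` -/

abbrev Pt : Type := ℕ × ℕ
abbrev TEdge : Type := Sym2 Pt

/-- `(x,y)` is a vertex of the triangular grid `Tₙ`. -/
def IsVertex (n : ℕ) (p : Pt) : Prop :=
  1 ≤ p.2 ∧ p.2 ≤ n + 1 ∧ 1 ≤ p.1 ∧ p.1 + p.2 ≤ n + 2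

/-- `e` is an edge of the triangular grid `Tₙ`. -/
def IsEdge (n : ℕ) (e : TEdge) : Prop :=
  ∃ x y : ℕ, IsVertex n (x, y) ∧
    ((e = s((x, y), (x + 1, y)) ∧ IsVertex n (x + 1, y)) ∨
     (e = s((x, y), (x, y + 1)) ∧ IsVertex n (x, y + 1)) ∨
     (e = s((x + 1, y), (x, y + 1)) ∧ IsVertex n (x + 1, y) ∧ IsVertex n (x, y + 1)))

/-- The three edges of the upward unit triangle with bottom-left corner `(x,y)`. -/
def upFace (x y : ℕ) : Set TEdge :=
  {s((x, y), (x + 1, y)), s((x, y), (x, y + 1)), s((x + 1, y), (x, y + 1))}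

/-- The three edges of the downward unit triangle. -/
def downFace (x y : ℕ) : Set TEdge :=
  {s((x + 1, y), (x, y + 1)), s((x + 1, y), (x + 1, y + 1)), s((x, y + 1), (x + 1, y + 1))}

/-- The upward triangle at `(x,y)` is a face of `Tₙ`. -/
def IsUpFace (n x y : ℕ) : Prop :=
  IsVertex n (x, y) ∧ IsVertex n (x + 1, y) ∧ IsVertex n (x, y + 1)

/-- The downward triangle at `(x,y)` is a face of `Tₙ`. -/
def IsDownFace (n x y : ℕ) : Prop :=
  IsVertex n (x + 1, y) ∧ IsVertex n (x, y + 1) ∧ IsVertex n (x + 1, y + 1)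

/-- A totally even subset of the edges of `Tₙ`: every vertex is incident to an even
number of its edges, and every unit triangular face contains an even number of its edges. -/
def TotallyEven (n : ℕ) (A : Set TEdge) : Prop :=
  (∀ e ∈ A, IsEdge n e) ∧
  (∀ p : Pt, IsVertex n p → Even (Set.ncard {e ∈ A | p ∈ e})) ∧
  (∀ x y : ℕ, IsUpFace n x y → Even (Set.ncard (A ∩ upFace x y))) ∧
  (∀ x y : ℕ, IsDownFace n x y → Even (Set.ncard (A ∩ downFace x y)))

/-- `C` is the edge set of a cycle in `Tₙ`. -/
def IsCycle (n : ℕ) (C : Set TEdge) : Prop :=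
  ∃ (m : ℕ) (f : ZMod m → Pt), 3 ≤ m ∧ Function.Injective f ∧
    (∀ i : ZMod m, IsEdge n s(f i, f (i + 1))) ∧
    C = {e : TEdge | ∃ i : ZMod m, e = s(f i, f (i + 1))}

/-- Two edge sets of `Tₙ` have the same Slitherlink signature: each unit triangular face
contains equally many edges of both. -/
def SameSignature (n : ℕ) (C₁ C₂ : Set TEdge) : Prop :=
  (∀ x y : ℕ, IsUpFace n x y →
    Set.ncard (C₁ ∩ upFace x y) = Set.ncard (C₂ ∩ upFace x y)) ∧
  (∀ x y : ℕ, IsDownFace n x y →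
    Set.ncard (C₁ ∩ downFace x y) = Set.ncard (C₂ ∩ downFace x y))

/-- `A` is the totally even subset `A(i)` of `Tₙ`: it is totally even and its intersection
with the bottom side is exactly the single edge `{(i,1),(i+1,1)}`. -/
def IsBasisSubset (n i : ℕ) (A : Set TEdge) : Prop :=
  TotallyEven n A ∧
  ∀ i' : ℕ, 1 ≤ i' → i' ≤ n → (s(((i' : ℕ), 1), (i' + 1, 1)) ∈ A ↔ i' = i)

/-!
Let `h`, `v`, `d` be the mod-2 indicators of `A` on the horizontal, vertical and diagonal
edges, and `a k` the parity of `A` on the first `k` bottom edges. Propagating the face and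
vertex conditions upwards, row by row, shows that the horizontal and vertical edges of the
up-triangle at `(x + 1, y + 1)` carry `a x + a (x + y + 1)` and `a y + a (x + y + 1)`. The
vertex conditions along the right side then give `a k = a (n - k)`, so with
`z = n - 1 - x - y` the three edges of that triangle carry `a x + a z`, `a y + a z` and
`a x + a y`. The reflection maps this up-triangle to the one with `x` and `z` exchanged,
fixing the horizontal edge and swapping the vertical and diagonal ones.
-/

def hEdge (x y : ℕ) : TEdge := s((x, y), (x + 1, y))
def vEdge (x y : ℕ) : TEdge := s((x, y), (x, y + 1))
def dEdge (x y : ℕ) : TEdge := s((x + 1, y), (x, y + 1))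

-- The six edges at the vertex `(x + 1, y + 1)`.
def incidentEdges (x y : ℕ) : Finset TEdge :=
  {hEdge x (y + 1), hEdge (x + 1) (y + 1), vEdge (x + 1) y, vEdge (x + 1) (y + 1),
    dEdge x (y + 1), dEdge (x + 1) y}

-- Labels `h x y`, `v x y`, `d x y` of `hEdge x y`, `vEdge x y`, `dEdge x y` obeying the
-- relations of a totally even set: zero just outside `Tₙ`, even on every up-triangle (also
-- off `Tₙ`, where all three labels vanish), every down-triangle and at every vertex.
structure EvenLabelling (n : ℕ) (h v d : ℕ → ℕ → ZMod 2) : Prop where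
  h_bottom : ∀ x, h x 0 = 0
  v_left : ∀ y, v 0 y = 0
  h_right : ∀ x y, x + y = n → h (x + 1) (y + 1) = 0
  v_right : ∀ x y, x + y = n → v (x + 1) (y + 1) = 0
  up : ∀ x y, h x y + v x y + d x y = 0
  down : ∀ x y, x + y + 2 ≤ n → d (x + 1) (y + 1) + v (x + 2) (y + 1) + h (x + 1) (y + 2) = 0
  vertex : ∀ x y, x + y ≤ n → h x (y + 1) + h (x + 1) (y + 1) + v (x + 1) y +
    v (x + 1) (y + 1) + d x (y + 1) + d (x + 1) y = 0

def bottomPrefix (h : ℕ → ℕ → ZMod 2) (k : ℕ) : ZMod 2 :=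
  ∑ j ∈ Finset.range k, h (j + 1) 1

namespace EvenLabelling

variable {n : ℕ} {h v d : ℕ → ℕ → ZMod 2}

lemma v_succ (hL : EvenLabelling n h v d) {x y : ℕ} (hxy : x + y ≤ n) :
    v (x + 1) (y + 1) = v x (y + 1) + h (x + 1) (y + 1) + h (x + 1) y := by
  have := hL.vertex x y hxy
  have := hL.up x (y + 1)
  have := hL.up (x + 1) y
  grind

lemma v_eq_of_h_eq (hL : EvenLabelling n h v d) (a : ℕ → ZMod 2) {y : ℕ}
    (hy : ∀ x, x + y ≤ n → h (x + 1) y = a x + a (x + y))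
    (hy' : ∀ x, x + (y + 1) ≤ n → h (x + 1) (y + 1) = a x + a (x + (y + 1))) :
    ∀ x, x + y ≤ n → v x (y + 1) = a y + a (x + y) := by
  intro x hx
  induction x with
  | zero => grind [hL.v_left]
  | succ x ih =>
    rw [hL.v_succ (by omega), ih (by omega), hy x (by omega), hy' x (by omega)]
    grind

lemma h_eq_bottomPrefix (hL : EvenLabelling n h v d) :
    ∀ y x, x + y ≤ n → h (x + 1) y = bottomPrefix h x + bottomPrefix h (x + y) := by
  intro y
  induction y using Nat.twoStepInduction with
  | zero => grind [hL.h_bottom]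
  | one =>
    intro x _
    have : bottomPrefix h (x + 1) = bottomPrefix h x + h (x + 1) 1 := Finset.sum_range_succ _ _
    grind
  | more y hy hy' =>
    intro x hx
    have hv := hL.v_eq_of_h_eq _ hy hy'
    have := hL.down x y (by omega)
    have := hL.up (x + 1) (y + 1)
    have := hv (x + 1) (by omega)
    have := hv (x + 2) (by omega)
    have := hy' x (by omega)
    grind

lemma v_eq_bottomPrefix (hL : EvenLabelling n h v d) {x y : ℕ} (hxy : x + y ≤ n) :
    v x (y + 1) = bottomPrefix h y + bottomPrefix h (x + y) :=
  hL.v_eq_of_h_eq _ (hL.h_eq_bottomPrefix y) (hL.h_eq_bottomPrefix (y + 1)) x hxy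

lemma bottomPrefix_symm (hL : EvenLabelling n h v d) {x y : ℕ} (hxy : x + y = n) :
    bottomPrefix h x = bottomPrefix h y := by
  have := hL.v_succ hxy.le
  have := hL.h_right x y hxy
  have := hL.v_right x y hxy
  have := hL.v_eq_bottomPrefix (x := x) (y := y) hxy.le
  have := hL.h_eq_bottomPrefix y x hxy.le
  grind

lemma eq_bottomPrefix_of_triangle (hL : EvenLabelling n h v d) {x y z : ℕ}
    (hxyz : x + y + z + 1 = n) :
    h (x + 1) (y + 1) = bottomPrefix h x + bottomPrefix h z ∧
      v (x + 1) (y + 1) = bottomPrefix h y + bottomPrefix h z ∧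
      d (x + 1) (y + 1) = bottomPrefix h x + bottomPrefix h y := by
  have := hL.h_eq_bottomPrefix (y + 1) x (by omega)
  have := hL.v_eq_bottomPrefix (x := x + 1) (y := y) (by omega)
  have := hL.up (x + 1) (y + 1)
  have := hL.bottomPrefix_symm (x := x + y + 1) (y := z) (by omega)
  grind

lemma h_symm (hL : EvenLabelling n h v d) {x y z : ℕ} (hxyz : x + y + z + 1 = n) :
    h (x + 1) (y + 1) = h (z + 1) (y + 1) := by
  rw [(hL.eq_bottomPrefix_of_triangle hxyz).1,
    (hL.eq_bottomPrefix_of_triangle (x := z) (z := x) (by omega)).1, add_comm]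

lemma v_eq_d_symm (hL : EvenLabelling n h v d) {x y z : ℕ} (hxyz : x + y + z + 1 = n) :
    v (x + 1) (y + 1) = d (z + 1) (y + 1) := by
  rw [(hL.eq_bottomPrefix_of_triangle hxyz).2.1,
    (hL.eq_bottomPrefix_of_triangle (x := z) (z := x) (by omega)).2.2, add_comm]

end EvenLabelling

lemma even_ncard_inter_iff_sum_indicator {α : Type*} (A : Set α) (F : Finset α) :
    Even (A ∩ ↑F).ncard ↔ ∑ e ∈ F, A.indicator (1 : α → ZMod 2) e = 0 := by
  classical
  rw [Finset.sum_indicator_eq_sum_filter]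
  simp only [Pi.one_apply, Finset.sum_const, nsmul_one]
  rw [ZMod.natCast_eq_zero_iff_even, ← Set.ncard_coe_finset, Finset.coe_filter]
  congr! 2
  ext e
  simp [and_comm]

lemma IsEdge.isVertex {n : ℕ} {e : TEdge} {p : Pt} (he : IsEdge n e) (hp : p ∈ e) :
    IsVertex n p := by
  obtain ⟨x, y, hv, ⟨rfl, hv'⟩ | ⟨rfl, hv'⟩ | ⟨rfl, hv', hv''⟩⟩ := he <;>
    rcases Sym2.mem_iff.1 hp with rfl | rfl <;> assumption

namespace TotallyEven

variable {n : ℕ} {A : Set TEdge}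

lemma indicator_eq_zero_of_not_isVertex (hA : TotallyEven n A) {p q : Pt}
    (hpq : ¬(IsVertex n p ∧ IsVertex n q)) : A.indicator (1 : TEdge → ZMod 2) s(p, q) = 0 :=
  Set.indicator_of_notMem (fun hm => hpq ⟨(hA.1 _ hm).isVertex (Sym2.mem_mk_left _ _),
    (hA.1 _ hm).isVertex (Sym2.mem_mk_right _ _)⟩) _

lemma upFace_sum (hA : TotallyEven n A) (x y : ℕ) :
    A.indicator 1 (hEdge x y) + A.indicator 1 (vEdge x y) +
      A.indicator (1 : TEdge → ZMod 2) (dEdge x y) = 0 := by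
  by_cases hxy : 1 ≤ x ∧ 1 ≤ y ∧ x + y ≤ n + 1
  · have hface : IsUpFace n x y := by simp only [IsUpFace, IsVertex]; omega
    have := hA.2.2.1 x y hface
    rw [show upFace x y = ↑({hEdge x y, vEdge x y, dEdge x y} : Finset TEdge) by
      simp [upFace, hEdge, vEdge, dEdge], even_ncard_inter_iff_sum_indicator] at this
    simpa [hEdge, vEdge, dEdge, add_assoc] using this
  · simp only [hEdge, vEdge, dEdge]
    rw [hA.indicator_eq_zero_of_not_isVertex, hA.indicator_eq_zero_of_not_isVertex,
      hA.indicator_eq_zero_of_not_isVertex, add_zero, add_zero]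
    all_goals simp only [IsVertex]; omega

lemma downFace_sum (hA : TotallyEven n A) {x y : ℕ} (hxy : x + y + 2 ≤ n) :
    A.indicator 1 (dEdge (x + 1) (y + 1)) + A.indicator 1 (vEdge (x + 2) (y + 1)) +
      A.indicator (1 : TEdge → ZMod 2) (hEdge (x + 1) (y + 2)) = 0 := by
  have hface : IsDownFace n (x + 1) (y + 1) := by simp only [IsDownFace, IsVertex]; omega
  have := hA.2.2.2 _ _ hface
  rw [show downFace (x + 1) (y + 1) = ↑({dEdge (x + 1) (y + 1), vEdge (x + 2) (y + 1),
      hEdge (x + 1) (y + 2)} : Finset TEdge) by simp [downFace, hEdge, vEdge, dEdge],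
    even_ncard_inter_iff_sum_indicator] at this
  simpa [hEdge, vEdge, dEdge, add_assoc] using this

lemma vertex_sum (hA : TotallyEven n A) {x y : ℕ} (hxy : x + y ≤ n) :
    A.indicator 1 (hEdge x (y + 1)) + A.indicator 1 (hEdge (x + 1) (y + 1)) +
      A.indicator 1 (vEdge (x + 1) y) + A.indicator 1 (vEdge (x + 1) (y + 1)) +
      A.indicator 1 (dEdge x (y + 1)) +
      A.indicator (1 : TEdge → ZMod 2) (dEdge (x + 1) y) = 0 := by
  have := hA.2.1 (x + 1, y + 1) (by simp only [IsVertex]; omega)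
  have hinc : {e ∈ A | (x + 1, y + 1) ∈ e} = A ∩ ↑(incidentEdges x y) := by
    ext e
    simp only [Set.mem_ofPred_eq, Set.mem_inter_iff, Finset.mem_coe, incidentEdges]
    refine ⟨fun ⟨he, hp⟩ => ⟨he, ?_⟩, fun ⟨he, hF⟩ => ⟨he, ?_⟩⟩
    · obtain ⟨a, b, -, ⟨rfl, -⟩ | ⟨rfl, -⟩ | ⟨rfl, -, -⟩⟩ := hA.1 e he <;>
        simp only [Sym2.mem_iff, Prod.mk.injEq, add_left_inj] at hp <;>
        obtain ⟨rfl, rfl⟩ | ⟨rfl, rfl⟩ := hp <;> simp [hEdge, vEdge, dEdge]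
    · simp only [Finset.mem_insert, Finset.mem_singleton] at hF
      rcases hF with rfl | rfl | rfl | rfl | rfl | rfl <;> simp [hEdge, vEdge, dEdge]
  rw [hinc, even_ncard_inter_iff_sum_indicator, incidentEdges, Finset.sum_insert,
    Finset.sum_insert, Finset.sum_insert, Finset.sum_insert, Finset.sum_insert,
    Finset.sum_singleton] at this
  · grind
  all_goals simp [hEdge, vEdge, dEdge] <;> omega

lemma evenLabelling (hA : TotallyEven n A) :
    EvenLabelling n (fun x y => A.indicator 1 (hEdge x y)) (fun x y => A.indicator 1 (vEdge x y))
      (fun x y => A.indicator 1 (dEdge x y)) where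
  h_bottom x := hA.indicator_eq_zero_of_not_isVertex (by simp [IsVertex])
  v_left y := hA.indicator_eq_zero_of_not_isVertex (by simp [IsVertex])
  h_right x y hxy := hA.indicator_eq_zero_of_not_isVertex (by simp only [IsVertex]; omega)
  v_right x y hxy := hA.indicator_eq_zero_of_not_isVertex (by simp only [IsVertex]; omega)
  up := hA.upFace_sum
  down _ _ := hA.downFace_sum
  vertex _ _ := hA.vertex_sum

end TotallyEven

def reflect (n : ℕ) (p : Pt) : Pt := (n + 3 - p.2 - p.1, p.2)

lemma reflect_reflect {n : ℕ} {p : Pt} (hp : IsVertex n (reflect n p)) :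
    reflect n (reflect n p) = p := by
  obtain ⟨x, y⟩ := p
  simp only [reflect, IsVertex, Prod.mk.injEq, and_true] at hp ⊢
  omega

section Reflection

variable {n x y z : ℕ}

lemma hEdge_map_reflect (hxyz : x + y + z + 1 = n) :
    (hEdge (x + 1) (y + 1)).map (reflect n) = hEdge (z + 1) (y + 1) := by
  simp only [hEdge, reflect, Sym2.map_mk, Sym2.eq_iff, Prod.mk.injEq, and_true]
  omega

lemma vEdge_map_reflect (hxyz : x + y + z + 1 = n) :
    (vEdge (x + 1) (y + 1)).map (reflect n) = dEdge (z + 1) (y + 1) := by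
  simp only [vEdge, dEdge, reflect, Sym2.map_mk, Sym2.eq_iff, Prod.mk.injEq, and_true]
  omega

lemma dEdge_map_reflect (hxyz : x + y + z + 1 = n) :
    (dEdge (x + 1) (y + 1)).map (reflect n) = vEdge (z + 1) (y + 1) := by
  simp only [vEdge, dEdge, reflect, Sym2.map_mk, Sym2.eq_iff, Prod.mk.injEq, and_true]
  omega

end Reflection

lemma IsEdge.exists_triangle {n : ℕ} {e : TEdge} (he : IsEdge n e) :
    ∃ x y z, x + y + z + 1 = n ∧
      (e = hEdge (x + 1) (y + 1) ∨ e = vEdge (x + 1) (y + 1) ∨ e = dEdge (x + 1) (y + 1)) := by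
  obtain ⟨a, b, hv, he⟩ := he
  obtain ⟨a, rfl⟩ : ∃ a', a = a' + 1 := ⟨a - 1, by simp only [IsVertex] at hv; omega⟩
  obtain ⟨b, rfl⟩ : ∃ b', b = b' + 1 := ⟨b - 1, by simp only [IsVertex] at hv; omega⟩
  refine ⟨a, b, n - 1 - a - b, ?_, ?_⟩
  · rcases he with ⟨-, h⟩ | ⟨-, h⟩ | ⟨-, h, -⟩ <;>
      simp only [IsVertex] at h hv <;> omega
  · rcases he with ⟨rfl, -⟩ | ⟨rfl, -⟩ | ⟨rfl, -⟩
    exacts [Or.inl rfl, Or.inr (Or.inl rfl), Or.inr (Or.inr rfl)]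

namespace TotallyEven

variable {n : ℕ} {A : Set TEdge}

lemma indicator_map_reflect (hA : TotallyEven n A) {e : TEdge} (he : IsEdge n e) :
    A.indicator (1 : TEdge → ZMod 2) (e.map (reflect n)) = A.indicator 1 e := by
  obtain ⟨x, y, z, hxyz, rfl | rfl | rfl⟩ := he.exists_triangle
  · rw [hEdge_map_reflect hxyz]
    exact (hA.evenLabelling.h_symm hxyz).symm
  · rw [vEdge_map_reflect hxyz]
    exact (hA.evenLabelling.v_eq_d_symm hxyz).symm
  · rw [dEdge_map_reflect hxyz]
    exact hA.evenLabelling.v_eq_d_symm (by omega)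

lemma map_reflect_mem (hA : TotallyEven n A) {e : TEdge} (he : e ∈ A) :
    e.map (reflect n) ∈ A := by
  rw [← Set.indicator_eq_one_iff_mem (ZMod 2), hA.indicator_map_reflect (hA.1 e he),
    Set.indicator_eq_one_iff_mem]
  exact he

lemma map_reflect_mem_iff (hA : TotallyEven n A) {e : TEdge} :
    e.map (reflect n) ∈ A ↔ e ∈ A := by
  refine ⟨fun he => ?_, hA.map_reflect_mem⟩
  have hinv : (e.map (reflect n)).map (reflect n) = e := by
    rw [Sym2.map_map]
    refine (Sym2.map_congr fun p hp => ?_).trans (congrFun Sym2.map_id e)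
    exact reflect_reflect ((hA.1 _ he).isVertex (Sym2.mem_map.2 ⟨p, hp, rfl⟩))
  rw [← hinv]
  exact hA.map_reflect_mem he

end TotallyEven

/-- Every totally even subset of `Tₙ` is symmetric about the middle, the reflection
`(x, y) ↦ (n + 3 - y - x, y)`. -/
theorem totallyEven_symmetric_middle (n : ℕ) (A : Set TEdge) (hA : TotallyEven n A)
    (x₁ y₁ x₂ y₂ : ℕ) :
    s((x₁, y₁), (x₂, y₂)) ∈ A ↔
      s((n + 3 - y₁ - x₁, y₁), (n + 3 - y₂ - x₂, y₂)) ∈ A :=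
  hA.map_reflect_mem_iff.symm
end

section
/- The totally even subsets of the edges of T_n, viewed as indicator vectors over F₂, form a vector space of dimension ⌊n/2⌋; equivalently, T_n has exactly 2^⌊n/2⌋ distinct totally even subsets. -/
section TnAux

open Finset

/-- horizontal edge -/
def hE (x y : ℕ) : TEdge := s((x, y), (x + 1, y))
/-- vertical edge -/
def vE (x y : ℕ) : TEdge := s((x, y), (x, y + 1))
/-- diagonal edge -/
def dE (x y : ℕ) : TEdge := s((x + 1, y), (x, y + 1))

lemma hE_eq_hE {x y x' y' : ℕ} : hE x y = hE x' y' ↔ x = x' ∧ y = y' := by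
  simp only [hE, Sym2.eq_iff, Prod.mk.injEq]; omega
lemma vE_eq_vE {x y x' y' : ℕ} : vE x y = vE x' y' ↔ x = x' ∧ y = y' := by
  simp only [vE, Sym2.eq_iff, Prod.mk.injEq]; omega
lemma dE_eq_dE {x y x' y' : ℕ} : dE x y = dE x' y' ↔ x = x' ∧ y = y' := by
  simp only [dE, Sym2.eq_iff, Prod.mk.injEq]; omega
lemma hE_ne_vE {x y x' y' : ℕ} : hE x y ≠ vE x' y' := by
  simp only [hE, vE, ne_eq, Sym2.eq_iff, Prod.mk.injEq]; omega
lemma hE_ne_dE {x y x' y' : ℕ} : hE x y ≠ dE x' y' := by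
  simp only [hE, dE, ne_eq, Sym2.eq_iff, Prod.mk.injEq]; omega
lemma vE_ne_dE {x y x' y' : ℕ} : vE x y ≠ dE x' y' := by
  simp only [vE, dE, ne_eq, Sym2.eq_iff, Prod.mk.injEq]; omega

/-- indicator of an edge set, with values in `𝔽₂`. -/
noncomputable def ind (A : Set TEdge) (e : TEdge) : ZMod 2 :=
  have := Classical.dec (e ∈ A); if e ∈ A then 1 else 0

lemma ind_eq_one {A : Set TEdge} {e : TEdge} (h : e ∈ A) : ind A e = 1 := by
  simp [ind, h]
lemma ind_eq_zero {A : Set TEdge} {e : TEdge} (h : e ∉ A) : ind A e = 0 := by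
  simp [ind, h]
lemma mem_of_ind_eq_one {A : Set TEdge} {e : TEdge} (h : ind A e = 1) : e ∈ A := by
  by_contra hc; rw [ind_eq_zero hc] at h; exact absurd h (by decide)
lemma ind_eq_iff_mem {A : Set TEdge} {e : TEdge} {c : ZMod 2} (hc : c = 1) :
    ind A e = c ↔ e ∈ A := by
  subst hc; exact ⟨mem_of_ind_eq_one, ind_eq_one⟩

/-- parity bridge: evenness of the intersection with a finite edge set. -/
lemma even_ncard_inter_iff (A : Set TEdge) (S : Finset TEdge) :
    Even ((A ∩ (S : Set TEdge)).ncard) ↔ ∑ e ∈ S, ind A e = 0 := by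
  classical
  have h1 : A ∩ (S : Set TEdge) = ((S.filter (· ∈ A) : Finset TEdge) : Set TEdge) := by
    ext e; simp [and_comm]
  rw [h1, Set.ncard_coe_finset]
  have h2 : ∑ e ∈ S, ind A e = ((S.filter (· ∈ A)).card : ZMod 2) := by
    rw [Finset.card_filter, Nat.cast_sum]
    refine Finset.sum_congr rfl fun e _ => ?_
    by_cases h : e ∈ A <;> simp [ind, h]
  rw [h2, ZMod.natCast_eq_zero_iff]
  exact even_iff_two_dvd

end TnAux
lemma isVertex_iff {n a b : ℕ} : IsVertex n (a, b) ↔ 1 ≤ a ∧ 1 ≤ b ∧ a + b ≤ n + 2 := by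
  simp only [IsVertex]; omega

lemma isEdge_cases {n : ℕ} {e : TEdge} (h : IsEdge n e) :
    ∃ x y, 1 ≤ x ∧ 1 ≤ y ∧ x + y ≤ n + 1 ∧ (e = hE x y ∨ e = vE x y ∨ e = dE x y) := by
  obtain ⟨x, y, hv, hc⟩ := h
  rw [isVertex_iff] at hv
  rcases hc with ⟨he, hv2⟩ | ⟨he, hv2⟩ | ⟨he, hv2, hv3⟩
  · rw [isVertex_iff] at hv2; exact ⟨x, y, by omega, by omega, by omega, Or.inl he⟩
  · rw [isVertex_iff] at hv2; exact ⟨x, y, by omega, by omega, by omega, Or.inr (Or.inl he)⟩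
  · rw [isVertex_iff] at hv2; exact ⟨x, y, by omega, by omega, by omega, Or.inr (Or.inr he)⟩

lemma isEdge_hE {n x y : ℕ} : IsEdge n (hE x y) ↔ 1 ≤ x ∧ 1 ≤ y ∧ x + y ≤ n + 1 := by
  constructor
  · intro h
    obtain ⟨x', y', h1, h2, h3, hc⟩ := isEdge_cases h
    rcases hc with he | he | he
    · rw [hE_eq_hE] at he; omega
    · exact absurd he hE_ne_vE
    · exact absurd he hE_ne_dE
  · rintro ⟨h1, h2, h3⟩
    exact ⟨x, y, isVertex_iff.2 ⟨h1, h2, by omega⟩, Or.inl ⟨rfl, isVertex_iff.2 ⟨by omega, h2, by omega⟩⟩⟩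

lemma isEdge_vE {n x y : ℕ} : IsEdge n (vE x y) ↔ 1 ≤ x ∧ 1 ≤ y ∧ x + y ≤ n + 1 := by
  constructor
  · intro h
    obtain ⟨x', y', h1, h2, h3, hc⟩ := isEdge_cases h
    rcases hc with he | he | he
    · exact absurd he.symm hE_ne_vE
    · rw [vE_eq_vE] at he; omega
    · exact absurd he vE_ne_dE
  · rintro ⟨h1, h2, h3⟩
    exact ⟨x, y, isVertex_iff.2 ⟨h1, h2, by omega⟩,
      Or.inr (Or.inl ⟨rfl, isVertex_iff.2 ⟨h1, by omega, by omega⟩⟩)⟩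

lemma isEdge_dE {n x y : ℕ} : IsEdge n (dE x y) ↔ 1 ≤ x ∧ 1 ≤ y ∧ x + y ≤ n + 1 := by
  constructor
  · intro h
    obtain ⟨x', y', h1, h2, h3, hc⟩ := isEdge_cases h
    rcases hc with he | he | he
    · exact absurd he.symm hE_ne_dE
    · exact absurd he.symm vE_ne_dE
    · rw [dE_eq_dE] at he; omega
  · rintro ⟨h1, h2, h3⟩
    exact ⟨x, y, isVertex_iff.2 ⟨h1, h2, by omega⟩,
      Or.inr (Or.inr ⟨rfl, isVertex_iff.2 ⟨by omega, h2, by omega⟩, isVertex_iff.2 ⟨h1, by omega, by omega⟩⟩)⟩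

/-- the six candidate edges at a vertex `(a,b)`. -/
def atV (a b : ℕ) : Finset TEdge :=
  {hE (a-1) b, hE a b, vE a (b-1), vE a b, dE (a-1) b, dE a (b-1)}

lemma mem_atV_of {n a b : ℕ} {e : TEdge} (ha : 1 ≤ a) (hb : 1 ≤ b)
    (he : IsEdge n e) (hp : ((a, b) : Pt) ∈ e) : e ∈ atV a b := by
  obtain ⟨x, y, h1, h2, h3, hc⟩ := isEdge_cases he
  simp only [atV, Finset.mem_insert, Finset.mem_singleton]
  rcases hc with rfl | rfl | rfl
  · rw [hE, Sym2.mem_iff] at hp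
    rcases hp with hp | hp <;> rw [Prod.mk.injEq] at hp
    · refine Or.inr (Or.inl ?_); rw [hE_eq_hE]; omega
    · refine Or.inl ?_; rw [hE_eq_hE]; omega
  · rw [vE, Sym2.mem_iff] at hp
    rcases hp with hp | hp <;> rw [Prod.mk.injEq] at hp
    · refine Or.inr (Or.inr (Or.inr (Or.inl ?_))); rw [vE_eq_vE]; omega
    · refine Or.inr (Or.inr (Or.inl ?_)); rw [vE_eq_vE]; omega
  · rw [dE, Sym2.mem_iff] at hp
    rcases hp with hp | hp <;> rw [Prod.mk.injEq] at hp
    · refine Or.inr (Or.inr (Or.inr (Or.inr (Or.inl ?_)))); rw [dE_eq_dE]; omega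
    · refine Or.inr (Or.inr (Or.inr (Or.inr (Or.inr ?_)))); rw [dE_eq_dE]; omega

lemma mem_edge_of_mem_atV {a b : ℕ} {e : TEdge} (ha : 1 ≤ a) (hb : 1 ≤ b)
    (he : e ∈ atV a b) : ((a, b) : Pt) ∈ e := by
  simp only [atV, Finset.mem_insert, Finset.mem_singleton] at he
  rcases he with rfl | rfl | rfl | rfl | rfl | rfl
  · rw [hE, Sym2.mem_iff]; right; rw [Prod.mk.injEq]; omega
  · rw [hE, Sym2.mem_iff]; left; rfl
  · rw [vE, Sym2.mem_iff]; right; rw [Prod.mk.injEq]; omega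
  · rw [vE, Sym2.mem_iff]; left; rfl
  · rw [dE, Sym2.mem_iff]; left; rw [Prod.mk.injEq]; omega
  · rw [dE, Sym2.mem_iff]; right; rw [Prod.mk.injEq]; omega

/-- the `𝔽₂` vertex sum at `(a,b)`. -/
noncomputable def vSum (A : Set TEdge) (a b : ℕ) : ZMod 2 :=
  ind A (hE (a-1) b) + ind A (hE a b) + ind A (vE a (b-1)) + ind A (vE a b) +
    ind A (dE (a-1) b) + ind A (dE a (b-1))

lemma sum_atV (f : TEdge → ZMod 2) {a b : ℕ} (ha : 1 ≤ a) (hb : 1 ≤ b) :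
    ∑ e ∈ atV a b, f e =
      f (hE (a-1) b) + f (hE a b) + f (vE a (b-1)) + f (vE a b) +
        f (dE (a-1) b) + f (dE a (b-1)) := by
  have d1 : hE (a-1) b ∉ ({hE a b, vE a (b-1), vE a b, dE (a-1) b, dE a (b-1)} : Finset TEdge) := by
    simp only [Finset.mem_insert, Finset.mem_singleton, hE_eq_hE, hE_ne_vE, hE_ne_dE, or_false,
      false_or]
    omega
  have d2 : hE a b ∉ ({vE a (b-1), vE a b, dE (a-1) b, dE a (b-1)} : Finset TEdge) := by
    simp [Finset.mem_insert, Finset.mem_singleton, hE_ne_vE, hE_ne_dE]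
  have d3 : vE a (b-1) ∉ ({vE a b, dE (a-1) b, dE a (b-1)} : Finset TEdge) := by
    simp only [Finset.mem_insert, Finset.mem_singleton, vE_eq_vE, vE_ne_dE, or_false]
    omega
  have d4 : vE a b ∉ ({dE (a-1) b, dE a (b-1)} : Finset TEdge) := by
    simp [Finset.mem_insert, Finset.mem_singleton, vE_ne_dE]
  have d5 : dE (a-1) b ∉ ({dE a (b-1)} : Finset TEdge) := by
    simp only [Finset.mem_singleton, dE_eq_dE]
    omega
  rw [atV, Finset.sum_insert d1, Finset.sum_insert d2, Finset.sum_insert d3,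
    Finset.sum_insert d4, Finset.sum_insert d5, Finset.sum_singleton]
  ring

lemma vertex_even_iff {n : ℕ} {A : Set TEdge} (hA : ∀ e ∈ A, IsEdge n e)
    {a b : ℕ} (ha : 1 ≤ a) (hb : 1 ≤ b) :
    Even (Set.ncard {e ∈ A | ((a, b) : Pt) ∈ e}) ↔ vSum A a b = 0 := by
  have hset : {e ∈ A | ((a, b) : Pt) ∈ e} = A ∩ ((atV a b : Finset TEdge) : Set TEdge) := by
    ext e
    simp only [Set.mem_setOf_eq, Set.mem_inter_iff, Finset.coe_insert, Finset.mem_coe]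
    exact ⟨fun ⟨h1, h2⟩ => ⟨h1, mem_atV_of ha hb (hA e h1) h2⟩,
      fun ⟨h1, h2⟩ => ⟨h1, mem_edge_of_mem_atV ha hb h2⟩⟩
  rw [hset, even_ncard_inter_iff, sum_atV _ ha hb, vSum]
lemma isUpFace_iff {n x y : ℕ} : IsUpFace n x y ↔ 1 ≤ x ∧ 1 ≤ y ∧ x + y ≤ n + 1 := by
  simp only [IsUpFace, isVertex_iff]; omega

lemma isDownFace_iff {n x y : ℕ} : IsDownFace n x y ↔ 1 ≤ x ∧ 1 ≤ y ∧ x + y ≤ n := by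
  simp only [IsDownFace, isVertex_iff]; omega

lemma upFace_eq (x y : ℕ) :
    upFace x y = (({hE x y, vE x y, dE x y} : Finset TEdge) : Set TEdge) := by
  ext e; simp [upFace, hE, vE, dE]

lemma downFace_eq (x y : ℕ) :
    downFace x y = (({dE x y, vE (x+1) y, hE x (y+1)} : Finset TEdge) : Set TEdge) := by
  ext e; simp [downFace, hE, vE, dE]

lemma up_even_iff (A : Set TEdge) (x y : ℕ) :
    Even (Set.ncard (A ∩ upFace x y)) ↔
      ind A (hE x y) + ind A (vE x y) + ind A (dE x y) = 0 := by
  rw [upFace_eq, even_ncard_inter_iff]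
  have d1 : hE x y ∉ ({vE x y, dE x y} : Finset TEdge) := by
    simp [hE_ne_vE, hE_ne_dE]
  have d2 : vE x y ∉ ({dE x y} : Finset TEdge) := by simp [vE_ne_dE]
  rw [Finset.sum_insert d1, Finset.sum_insert d2, Finset.sum_singleton, add_assoc]

lemma down_even_iff (A : Set TEdge) (x y : ℕ) :
    Even (Set.ncard (A ∩ downFace x y)) ↔
      ind A (dE x y) + ind A (vE (x+1) y) + ind A (hE x (y+1)) = 0 := by
  rw [downFace_eq, even_ncard_inter_iff]
  have d1 : dE x y ∉ ({vE (x+1) y, hE x (y+1)} : Finset TEdge) := by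
    simp only [Finset.mem_insert, Finset.mem_singleton]
    push_neg
    exact ⟨fun h => vE_ne_dE h.symm, fun h => hE_ne_dE h.symm⟩
  have d2 : vE (x+1) y ∉ ({hE x (y+1)} : Finset TEdge) := by
    simp only [Finset.mem_singleton]
    exact fun h => hE_ne_vE h.symm
  rw [Finset.sum_insert d1, Finset.sum_insert d2, Finset.sum_singleton, add_assoc]

lemma totallyEven_iff {n : ℕ} (A : Set TEdge) :
    TotallyEven n A ↔
      (∀ e ∈ A, IsEdge n e) ∧
      (∀ a b : ℕ, 1 ≤ a → 1 ≤ b → a + b ≤ n + 2 → vSum A a b = 0) ∧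
      (∀ x y : ℕ, 1 ≤ x → 1 ≤ y → x + y ≤ n + 1 →
        ind A (hE x y) + ind A (vE x y) + ind A (dE x y) = 0) ∧
      (∀ x y : ℕ, 1 ≤ x → 1 ≤ y → x + y ≤ n →
        ind A (dE x y) + ind A (vE (x+1) y) + ind A (hE x (y+1)) = 0) := by
  constructor
  · rintro ⟨h1, h2, h3, h4⟩
    refine ⟨h1, fun a b ha hb hab => ?_, fun x y hx hy hxy => ?_, fun x y hx hy hxy => ?_⟩
    · exact (vertex_even_iff h1 ha hb).1 (h2 (a, b) (isVertex_iff.2 ⟨ha, hb, hab⟩))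
    · exact (up_even_iff A x y).1 (h3 x y (isUpFace_iff.2 ⟨hx, hy, hxy⟩))
    · exact (down_even_iff A x y).1 (h4 x y (isDownFace_iff.2 ⟨hx, hy, hxy⟩))
  · rintro ⟨h1, h2, h3, h4⟩
    refine ⟨h1, fun p hp => ?_, fun x y hf => ?_, fun x y hf => ?_⟩
    · obtain ⟨a, b⟩ := p
      rw [isVertex_iff] at hp
      exact (vertex_even_iff h1 hp.1 hp.2.1).2 (h2 a b hp.1 hp.2.1 hp.2.2)
    · rw [isUpFace_iff] at hf
      exact (up_even_iff A x y).2 (h3 x y hf.1 hf.2.1 hf.2.2)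
    · rw [isDownFace_iff] at hf
      exact (down_even_iff A x y).2 (h4 x y hf.1 hf.2.1 hf.2.2)
/-- The totally even set associated with a prefix-sum function `J`. -/
def solJ (n : ℕ) (J : ℕ → ZMod 2) : Set TEdge :=
  {e | ∃ x y, 1 ≤ x ∧ 1 ≤ y ∧ x + y ≤ n + 1 ∧
    ((e = hE x y ∧ J (x + y - 1) + J (x - 1) = 1) ∨
     (e = vE x y ∧ J (x + y - 1) + J (y - 1) = 1) ∨
     (e = dE x y ∧ J (x - 1) + J (y - 1) = 1))}

lemma solJ_subset {n : ℕ} (J : ℕ → ZMod 2) : ∀ e ∈ solJ n J, IsEdge n e := by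
  rintro e ⟨x, y, hx, hy, hxy, hc⟩
  rcases hc with ⟨rfl, -⟩ | ⟨rfl, -⟩ | ⟨rfl, -⟩
  · exact isEdge_hE.2 ⟨hx, hy, hxy⟩
  · exact isEdge_vE.2 ⟨hx, hy, hxy⟩
  · exact isEdge_dE.2 ⟨hx, hy, hxy⟩

lemma zmod2_cases (a : ZMod 2) : a = 0 ∨ a = 1 := by revert a; decide

lemma ind_solJ_hE {n : ℕ} (J : ℕ → ZMod 2) {x y : ℕ} (hx : 1 ≤ x) (hy : 1 ≤ y)
    (hxy : x + y ≤ n + 1) : ind (solJ n J) (hE x y) = J (x + y - 1) + J (x - 1) := by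
  rcases zmod2_cases (J (x + y - 1) + J (x - 1)) with h | h <;> rw [h]
  · apply ind_eq_zero
    rintro ⟨x', y', -, -, -, hc⟩
    rcases hc with ⟨he, hv⟩ | ⟨he, -⟩ | ⟨he, -⟩
    · rw [hE_eq_hE] at he; obtain ⟨rfl, rfl⟩ := he; rw [h] at hv; exact absurd hv (by decide)
    · exact hE_ne_vE he
    · exact hE_ne_dE he
  · exact ind_eq_one ⟨x, y, hx, hy, hxy, Or.inl ⟨rfl, h⟩⟩

lemma ind_solJ_vE {n : ℕ} (J : ℕ → ZMod 2) {x y : ℕ} (hx : 1 ≤ x) (hy : 1 ≤ y)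
    (hxy : x + y ≤ n + 1) : ind (solJ n J) (vE x y) = J (x + y - 1) + J (y - 1) := by
  rcases zmod2_cases (J (x + y - 1) + J (y - 1)) with h | h <;> rw [h]
  · apply ind_eq_zero
    rintro ⟨x', y', -, -, -, hc⟩
    rcases hc with ⟨he, -⟩ | ⟨he, hv⟩ | ⟨he, -⟩
    · exact hE_ne_vE he.symm
    · rw [vE_eq_vE] at he; obtain ⟨rfl, rfl⟩ := he; rw [h] at hv; exact absurd hv (by decide)
    · exact vE_ne_dE he
  · exact ind_eq_one ⟨x, y, hx, hy, hxy, Or.inr (Or.inl ⟨rfl, h⟩)⟩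

lemma ind_solJ_dE {n : ℕ} (J : ℕ → ZMod 2) {x y : ℕ} (hx : 1 ≤ x) (hy : 1 ≤ y)
    (hxy : x + y ≤ n + 1) : ind (solJ n J) (dE x y) = J (x - 1) + J (y - 1) := by
  rcases zmod2_cases (J (x - 1) + J (y - 1)) with h | h <;> rw [h]
  · apply ind_eq_zero
    rintro ⟨x', y', -, -, -, hc⟩
    rcases hc with ⟨he, -⟩ | ⟨he, -⟩ | ⟨he, hv⟩
    · exact hE_ne_dE he.symm
    · exact vE_ne_dE he.symm
    · rw [dE_eq_dE] at he; obtain ⟨rfl, rfl⟩ := he; rw [h] at hv; exact absurd hv (by decide)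
  · exact ind_eq_one ⟨x, y, hx, hy, hxy, Or.inr (Or.inr ⟨rfl, h⟩)⟩

lemma ind_invalid_hE {n : ℕ} {A : Set TEdge} (hA : ∀ e ∈ A, IsEdge n e) {x y : ℕ}
    (h : ¬(1 ≤ x ∧ 1 ≤ y ∧ x + y ≤ n + 1)) : ind A (hE x y) = 0 :=
  ind_eq_zero (fun hc => h (isEdge_hE.1 (hA _ hc)))

lemma ind_invalid_vE {n : ℕ} {A : Set TEdge} (hA : ∀ e ∈ A, IsEdge n e) {x y : ℕ}
    (h : ¬(1 ≤ x ∧ 1 ≤ y ∧ x + y ≤ n + 1)) : ind A (vE x y) = 0 :=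
  ind_eq_zero (fun hc => h (isEdge_vE.1 (hA _ hc)))

lemma ind_invalid_dE {n : ℕ} {A : Set TEdge} (hA : ∀ e ∈ A, IsEdge n e) {x y : ℕ}
    (h : ¬(1 ≤ x ∧ 1 ≤ y ∧ x + y ≤ n + 1)) : ind A (dE x y) = 0 :=
  ind_eq_zero (fun hc => h (isEdge_dE.1 (hA _ hc)))
lemma J2 (J : ℕ → ZMod 2) {p q p' q' : ℕ} (h1 : p = p') (h2 : q = q') :
    J p + J q = J p' + J q' := by rw [h1, h2]

lemma zC0 : (0 : ZMod 2) + 0 + 0 + 0 + 0 + 0 = 0 := by decide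
lemma zC1 : ∀ u : ZMod 2, 0 + u + 0 + u + 0 + 0 = 0 := by decide
lemma zC2 : ∀ p q r s : ZMod 2, (p+q) + (r+p) + 0 + (r+s) + (q+s) + 0 = 0 := by decide
lemma zC3 : ∀ q : ZMod 2, (0+q) + 0 + 0 + 0 + (q+0) + 0 = 0 := by decide
lemma zC4 : ∀ p q r s : ZMod 2, 0 + (p+q) + (r+s) + (p+r) + 0 + (q+s) = 0 := by decide
lemma zC5 : ∀ q : ZMod 2, 0 + 0 + (0+q) + 0 + 0 + (0+q) = 0 := by decide
lemma zC6 : ∀ p1 p2 q1 q2 r1 r2 : ZMod 2,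
    (p1+p2) + (q1+q2) + (p1+r1) + (q1+r2) + (p2+r2) + (q2+r1) = 0 := by decide
lemma zC7 : ∀ p q r : ZMod 2, (0+p) + 0 + (0+q) + 0 + (p+r) + (r+q) = 0 := by decide
lemma zUp : ∀ p q r : ZMod 2, (p+q) + (p+r) + (q+r) = 0 := by decide
lemma zDown : ∀ p q r : ZMod 2, (q+r) + (p+r) + (p+q) = 0 := by decide

lemma solJ_totallyEven {n : ℕ} (J : ℕ → ZMod 2) (hJ0 : J 0 = 0)
    (hsym : ∀ k, k ≤ n → J k = J (n - k)) : TotallyEven n (solJ n J) := by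
  have hJn : J n = 0 := by rw [hsym n le_rfl, Nat.sub_self, hJ0]
  have hsub := solJ_subset (n := n) J
  rw [totallyEven_iff]
  refine ⟨hsub, ?_, ?_, ?_⟩
  · intro a b ha hb hab
    simp only [vSum]
    by_cases hb1 : b = 1
    · subst hb1
      by_cases ha1 : a = 1
      · subst ha1
        by_cases hn : 1 ≤ n
        · have t1 : ind (solJ n J) (hE (1-1) 1) = 0 := ind_invalid_hE hsub (by omega)
          have t2 : ind (solJ n J) (hE 1 1) = J 1 + J 0 := by
            rw [ind_solJ_hE J le_rfl le_rfl (by omega)]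
          have t3 : ind (solJ n J) (vE 1 (1-1)) = 0 := ind_invalid_vE hsub (by omega)
          have t4 : ind (solJ n J) (vE 1 1) = J 1 + J 0 := by
            rw [ind_solJ_vE J le_rfl le_rfl (by omega)]
          have t5 : ind (solJ n J) (dE (1-1) 1) = 0 := ind_invalid_dE hsub (by omega)
          have t6 : ind (solJ n J) (dE 1 (1-1)) = 0 := ind_invalid_dE hsub (by omega)
          rw [t1, t2, t3, t4, t5, t6]
          exact zC1 _
        · have t1 : ind (solJ n J) (hE (1-1) 1) = 0 := ind_invalid_hE hsub (by omega)
          have t2 : ind (solJ n J) (hE 1 1) = 0 := ind_invalid_hE hsub (by omega)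
          have t3 : ind (solJ n J) (vE 1 (1-1)) = 0 := ind_invalid_vE hsub (by omega)
          have t4 : ind (solJ n J) (vE 1 1) = 0 := ind_invalid_vE hsub (by omega)
          have t5 : ind (solJ n J) (dE (1-1) 1) = 0 := ind_invalid_dE hsub (by omega)
          have t6 : ind (solJ n J) (dE 1 (1-1)) = 0 := ind_invalid_dE hsub (by omega)
          rw [t1, t2, t3, t4, t5, t6]
          exact zC0
      · by_cases han : a ≤ n
        · -- bottom interior
          have t1 : ind (solJ n J) (hE (a-1) 1) = J (a-1) + J (a-2) :=
            (ind_solJ_hE J (by omega) le_rfl (by omega)).trans (J2 J (by omega) (by omega))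
          have t2 : ind (solJ n J) (hE a 1) = J a + J (a-1) :=
            (ind_solJ_hE J (by omega) le_rfl (by omega)).trans (J2 J (by omega) (by omega))
          have t3 : ind (solJ n J) (vE a (1-1)) = 0 := ind_invalid_vE hsub (by omega)
          have t4 : ind (solJ n J) (vE a 1) = J a + J 0 :=
            (ind_solJ_vE J (by omega) le_rfl (by omega)).trans (J2 J (by omega) (by omega))
          have t5 : ind (solJ n J) (dE (a-1) 1) = J (a-2) + J 0 :=
            (ind_solJ_dE J (by omega) le_rfl (by omega)).trans (J2 J (by omega) (by omega))
          have t6 : ind (solJ n J) (dE a (1-1)) = 0 := ind_invalid_dE hsub (by omega)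
          rw [t1, t2, t3, t4, t5, t6]
          exact zC2 _ _ _ _
        · -- bottom right corner : a = n+1
          have t1 : ind (solJ n J) (hE (a-1) 1) = J n + J (n-1) :=
            (ind_solJ_hE J (by omega) le_rfl (by omega)).trans (J2 J (by omega) (by omega))
          have t2 : ind (solJ n J) (hE a 1) = 0 := ind_invalid_hE hsub (by omega)
          have t3 : ind (solJ n J) (vE a (1-1)) = 0 := ind_invalid_vE hsub (by omega)
          have t4 : ind (solJ n J) (vE a 1) = 0 := ind_invalid_vE hsub (by omega)
          have t5 : ind (solJ n J) (dE (a-1) 1) = J (n-1) + J 0 :=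
            (ind_solJ_dE J (by omega) le_rfl (by omega)).trans (J2 J (by omega) (by omega))
          have t6 : ind (solJ n J) (dE a (1-1)) = 0 := ind_invalid_dE hsub (by omega)
          rw [t1, t2, t3, t4, t5, t6, hJn, hJ0]
          exact zC3 _
    · by_cases ha1 : a = 1
      · subst ha1
        by_cases hbn : b ≤ n
        · -- left side
          have t1 : ind (solJ n J) (hE (1-1) b) = 0 := ind_invalid_hE hsub (by omega)
          have t2 : ind (solJ n J) (hE 1 b) = J b + J 0 :=
            (ind_solJ_hE J le_rfl (by omega) (by omega)).trans (J2 J (by omega) (by omega))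
          have t3 : ind (solJ n J) (vE 1 (b-1)) = J (b-1) + J (b-2) :=
            (ind_solJ_vE J le_rfl (by omega) (by omega)).trans (J2 J (by omega) (by omega))
          have t4 : ind (solJ n J) (vE 1 b) = J b + J (b-1) :=
            (ind_solJ_vE J le_rfl (by omega) (by omega)).trans (J2 J (by omega) (by omega))
          have t5 : ind (solJ n J) (dE (1-1) b) = 0 := ind_invalid_dE hsub (by omega)
          have t6 : ind (solJ n J) (dE 1 (b-1)) = J 0 + J (b-2) :=
            (ind_solJ_dE J le_rfl (by omega) (by omega)).trans (J2 J (by omega) (by omega))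
          rw [t1, t2, t3, t4, t5, t6]
          exact zC4 _ _ _ _
        · -- top corner : b = n+1
          have t1 : ind (solJ n J) (hE (1-1) b) = 0 := ind_invalid_hE hsub (by omega)
          have t2 : ind (solJ n J) (hE 1 b) = 0 := ind_invalid_hE hsub (by omega)
          have t3 : ind (solJ n J) (vE 1 (b-1)) = J n + J (n-1) :=
            (ind_solJ_vE J le_rfl (by omega) (by omega)).trans (J2 J (by omega) (by omega))
          have t4 : ind (solJ n J) (vE 1 b) = 0 := ind_invalid_vE hsub (by omega)
          have t5 : ind (solJ n J) (dE (1-1) b) = 0 := ind_invalid_dE hsub (by omega)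
          have t6 : ind (solJ n J) (dE 1 (b-1)) = J 0 + J (n-1) :=
            (ind_solJ_dE J le_rfl (by omega) (by omega)).trans (J2 J (by omega) (by omega))
          rw [t1, t2, t3, t4, t5, t6, hJn, hJ0]
          exact zC5 _
      · by_cases hint : a + b ≤ n + 1
        · -- interior
          have t1 : ind (solJ n J) (hE (a-1) b) = J (a+b-2) + J (a-2) :=
            (ind_solJ_hE J (by omega) (by omega) (by omega)).trans (J2 J (by omega) (by omega))
          have t2 : ind (solJ n J) (hE a b) = J (a+b-1) + J (a-1) :=
            (ind_solJ_hE J (by omega) (by omega) (by omega)).trans (J2 J (by omega) (by omega))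
          have t3 : ind (solJ n J) (vE a (b-1)) = J (a+b-2) + J (b-2) :=
            (ind_solJ_vE J (by omega) (by omega) (by omega)).trans (J2 J (by omega) (by omega))
          have t4 : ind (solJ n J) (vE a b) = J (a+b-1) + J (b-1) :=
            (ind_solJ_vE J (by omega) (by omega) (by omega)).trans (J2 J (by omega) (by omega))
          have t5 : ind (solJ n J) (dE (a-1) b) = J (a-2) + J (b-1) :=
            (ind_solJ_dE J (by omega) (by omega) (by omega)).trans (J2 J (by omega) (by omega))
          have t6 : ind (solJ n J) (dE a (b-1)) = J (a-1) + J (b-2) :=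
            (ind_solJ_dE J (by omega) (by omega) (by omega)).trans (J2 J (by omega) (by omega))
          rw [t1, t2, t3, t4, t5, t6]
          exact zC6 _ _ _ _ _ _
        · -- right side : a + b = n + 2
          have hswap : J (a-1) = J (b-1) := by
            rw [hsym (a-1) (by omega)]; exact congrArg J (by omega)
          have t1 : ind (solJ n J) (hE (a-1) b) = J n + J (a-2) :=
            (ind_solJ_hE J (by omega) (by omega) (by omega)).trans (J2 J (by omega) (by omega))
          have t2 : ind (solJ n J) (hE a b) = 0 := ind_invalid_hE hsub (by omega)
          have t3 : ind (solJ n J) (vE a (b-1)) = J n + J (b-2) :=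
            (ind_solJ_vE J (by omega) (by omega) (by omega)).trans (J2 J (by omega) (by omega))
          have t4 : ind (solJ n J) (vE a b) = 0 := ind_invalid_vE hsub (by omega)
          have t5 : ind (solJ n J) (dE (a-1) b) = J (a-2) + J (b-1) :=
            (ind_solJ_dE J (by omega) (by omega) (by omega)).trans (J2 J (by omega) (by omega))
          have t6 : ind (solJ n J) (dE a (b-1)) = J (a-1) + J (b-2) :=
            (ind_solJ_dE J (by omega) (by omega) (by omega)).trans (J2 J (by omega) (by omega))
          rw [t1, t2, t3, t4, t5, t6, hJn, hswap]
          exact zC7 _ _ _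
  · intro x y hx hy hxy
    rw [ind_solJ_hE J hx hy hxy, ind_solJ_vE J hx hy hxy, ind_solJ_dE J hx hy hxy]
    exact zUp _ _ _
  · intro x y hx hy hxy
    have t1 : ind (solJ n J) (dE x y) = J (x-1) + J (y-1) :=
      ind_solJ_dE J hx hy (by omega)
    have t2 : ind (solJ n J) (vE (x+1) y) = J (x+y) + J (y-1) :=
      (ind_solJ_vE J (by omega) hy (by omega)).trans (J2 J (by omega) (by omega))
    have t3 : ind (solJ n J) (hE x (y+1)) = J (x+y) + J (x-1) :=
      (ind_solJ_hE J hx (by omega) (by omega)).trans (J2 J (by omega) (by omega))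
    rw [t1, t2, t3]
    exact zDown _ _ _
lemma zSolveDownH : ∀ p q r h : ZMod 2, (q+r)+(p+r)+h = 0 → h = p+q := by decide
lemma zSolveUpD : ∀ p q s d : ZMod 2, (p+q)+(p+s)+d = 0 → d = q+s := by decide
lemma zSolveBottom1V : ∀ u v : ZMod 2, 0+u+0+v+0+0 = 0 → v = u := by decide
lemma zSolveBottomV : ∀ p q r s v : ZMod 2,
    (p+q)+(r+p)+0+v+(q+s)+0 = 0 → v = r+s := by decide
lemma zSolveLeftV : ∀ p q r s v : ZMod 2,
    0+(p+q)+(r+s)+v+0+(q+s) = 0 → v = p+r := by decide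
lemma zSolveIntV : ∀ p1 p2 q1 q2 r1 r2 v : ZMod 2,
    (p1+p2)+(q1+q2)+(p1+r1)+v+(p2+r2)+(q2+r1) = 0 → v = q1+r2 := by decide

lemma rows_lemma {n : ℕ} {A : Set TEdge}
    (hsub : ∀ e ∈ A, IsEdge n e)
    (hvert : ∀ a b : ℕ, 1 ≤ a → 1 ≤ b → a + b ≤ n + 2 → vSum A a b = 0)
    (hup : ∀ x y : ℕ, 1 ≤ x → 1 ≤ y → x + y ≤ n + 1 →
      ind A (hE x y) + ind A (vE x y) + ind A (dE x y) = 0)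
    (hdown : ∀ x y : ℕ, 1 ≤ x → 1 ≤ y → x + y ≤ n →
      ind A (dE x y) + ind A (vE (x+1) y) + ind A (hE x (y+1)) = 0)
    (J : ℕ → ZMod 2)
    (hbot : ∀ x, 1 ≤ x → x ≤ n → ind A (hE x 1) = J x + J (x-1)) :
    ∀ v u : ℕ, u + v + 2 ≤ n + 1 →
      ind A (hE (u+1) (v+1)) = J (u+v+1) + J u ∧
      ind A (vE (u+1) (v+1)) = J (u+v+1) + J v ∧
      ind A (dE (u+1) (v+1)) = J u + J v := by
  intro v
  induction v with
  | zero =>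
    have Hrow : ∀ u, u + 2 ≤ n + 1 → ind A (hE (u+1) 1) = J (u+1) + J u := by
      intro u hu
      exact (hbot (u+1) (by omega) (by omega)).trans (J2 J rfl (by omega))
    have VD : ∀ u, u + 2 ≤ n + 1 →
        ind A (vE (u+1) 1) = J (u+1) + J 0 ∧ ind A (dE (u+1) 1) = J u + J 0 := by
      intro u
      induction u with
      | zero =>
        intro hu
        have hv := hvert 1 1 le_rfl le_rfl (by omega)
        simp only [vSum] at hv
        have t1 : ind A (hE (1-1) 1) = 0 := ind_invalid_hE hsub (by omega)
        have t3 : ind A (vE 1 (1-1)) = 0 := ind_invalid_vE hsub (by omega)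
        have t5 : ind A (dE (1-1) 1) = 0 := ind_invalid_dE hsub (by omega)
        have t6 : ind A (dE 1 (1-1)) = 0 := ind_invalid_dE hsub (by omega)
        have t2 : ind A (hE 1 1) = J 1 + J 0 := by
          have h0 := Hrow 0 (by omega)
          rw [show (0:ℕ)+1 = 1 from rfl] at h0
          exact h0
        rw [t1, t2, t3, t5, t6] at hv
        have hvE : ind A (vE 1 1) = J 1 + J 0 := zSolveBottom1V _ _ hv
        have hu2 := hup 1 1 le_rfl le_rfl (by omega)
        rw [t2, hvE] at hu2
        have hdE : ind A (dE 1 1) = J 0 + J 0 := zSolveUpD _ _ _ _ hu2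
        rw [show (0:ℕ)+1 = 1 from rfl]
        exact ⟨hvE, hdE⟩
      | succ u IHu =>
        intro hu
        have hI := IHu (by omega)
        have hv := hvert (u+1+1) 1 (by omega) le_rfl (by omega)
        simp only [vSum] at hv
        have t1 : ind A (hE (u+1+1-1) 1) = J (u+1) + J u := by
          rw [show u+1+1-1 = u+1 from by omega]; exact Hrow u (by omega)
        have t2 : ind A (hE (u+1+1) 1) = J (u+1+1) + J (u+1) := by
          exact (hbot (u+1+1) (by omega) (by omega)).trans (J2 J rfl (by omega))
        have t3 : ind A (vE (u+1+1) (1-1)) = 0 := ind_invalid_vE hsub (by omega)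
        have t5 : ind A (dE (u+1+1-1) 1) = J u + J 0 := by
          rw [show u+1+1-1 = u+1 from by omega]; exact hI.2
        have t6 : ind A (dE (u+1+1) (1-1)) = 0 := ind_invalid_dE hsub (by omega)
        rw [t1, t2, t3, t5, t6] at hv
        have hvE : ind A (vE (u+1+1) 1) = J (u+1+1) + J 0 := zSolveBottomV _ _ _ _ _ hv
        have hu2 := hup (u+1+1) 1 (by omega) le_rfl (by omega)
        rw [t2, hvE] at hu2
        have hdE : ind A (dE (u+1+1) 1) = J (u+1) + J 0 := zSolveUpD _ _ _ _ hu2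
        exact ⟨hvE, hdE⟩
    intro u hu
    refine ⟨?_, ?_, ?_⟩
    · have := Hrow u (by omega)
      exact this.trans (J2 J (by omega) rfl)
    · have := (VD u (by omega)).1
      exact this.trans (J2 J (by omega) rfl)
    · exact (VD u (by omega)).2
  | succ v IH =>
    have Hrow2 : ∀ u, u + (v+1) + 2 ≤ n + 1 →
        ind A (hE (u+1) (v+1+1)) = J (u+v+2) + J u := by
      intro u hu
      have hd := hdown (u+1) (v+1) (by omega) (by omega) (by omega)
      have hIH1 := (IH u (by omega)).2.2
      have hIH2 := (IH (u+1) (by omega)).2.1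
      rw [hIH1, hIH2] at hd
      exact (zSolveDownH _ _ _ _ hd).trans (J2 J (by omega) rfl)
    have VD2 : ∀ u, u + (v+1) + 2 ≤ n + 1 →
        ind A (vE (u+1) (v+1+1)) = J (u+v+2) + J (v+1) ∧
        ind A (dE (u+1) (v+1+1)) = J u + J (v+1) := by
      intro u
      induction u with
      | zero =>
        intro hu
        have hv := hvert 1 (v+1+1) le_rfl (by omega) (by omega)
        simp only [vSum] at hv
        have t1 : ind A (hE (1-1) (v+1+1)) = 0 := ind_invalid_hE hsub (by omega)
        have t5 : ind A (dE (1-1) (v+1+1)) = 0 := ind_invalid_dE hsub (by omega)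
        have t2 : ind A (hE 1 (v+1+1)) = J (v+2) + J 0 := by
          have h0 := Hrow2 0 (by omega)
          rw [show (0:ℕ)+1 = 1 from rfl] at h0
          exact h0.trans (J2 J (by omega) rfl)
        have t3 : ind A (vE 1 (v+1+1-1)) = J (v+1) + J v := by
          rw [show v+1+1-1 = v+1 from by omega]
          have h0 := (IH 0 (by omega)).2.1
          rw [show (0:ℕ)+1 = 1 from rfl] at h0
          exact h0.trans (J2 J (by omega) rfl)
        have t6 : ind A (dE 1 (v+1+1-1)) = J 0 + J v := by
          rw [show v+1+1-1 = v+1 from by omega]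
          have h0 := (IH 0 (by omega)).2.2
          rw [show (0:ℕ)+1 = 1 from rfl] at h0
          exact h0
        rw [t1, t2, t3, t5, t6] at hv
        have hvE : ind A (vE 1 (v+1+1)) = J (v+2) + J (v+1) := zSolveLeftV _ _ _ _ _ hv
        have hu2 := hup 1 (v+1+1) le_rfl (by omega) (by omega)
        rw [t2, hvE] at hu2
        have hdE : ind A (dE 1 (v+1+1)) = J 0 + J (v+1) := zSolveUpD _ _ _ _ hu2
        rw [show (0:ℕ)+1 = 1 from rfl]
        exact ⟨hvE.trans (J2 J (by omega) rfl), hdE⟩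
      | succ u IHu =>
        intro hu
        have hIu := IHu (by omega)
        have hv := hvert (u+1+1) (v+1+1) (by omega) (by omega) (by omega)
        simp only [vSum] at hv
        have t1 : ind A (hE (u+1+1-1) (v+1+1)) = J (u+v+2) + J u := by
          rw [show u+1+1-1 = u+1 from by omega]; exact Hrow2 u (by omega)
        have t2 : ind A (hE (u+1+1) (v+1+1)) = J (u+v+3) + J (u+1) := by
          exact (Hrow2 (u+1) (by omega)).trans (J2 J (by omega) rfl)
        have t3 : ind A (vE (u+1+1) (v+1+1-1)) = J (u+v+2) + J v := by
          rw [show v+1+1-1 = v+1 from by omega]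
          exact ((IH (u+1) (by omega)).2.1).trans (J2 J (by omega) rfl)
        have t5 : ind A (dE (u+1+1-1) (v+1+1)) = J u + J (v+1) := by
          rw [show u+1+1-1 = u+1 from by omega]; exact hIu.2
        have t6 : ind A (dE (u+1+1) (v+1+1-1)) = J (u+1) + J v := by
          rw [show v+1+1-1 = v+1 from by omega]
          exact (IH (u+1) (by omega)).2.2
        rw [t1, t2, t3, t5, t6] at hv
        have hvE : ind A (vE (u+1+1) (v+1+1)) = J (u+v+3) + J (v+1) :=
          zSolveIntV _ _ _ _ _ _ _ hv
        have hu2 := hup (u+1+1) (v+1+1) (by omega) (by omega) (by omega)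
        rw [t2, hvE] at hu2
        have hdE : ind A (dE (u+1+1) (v+1+1)) = J (u+1) + J (v+1) := zSolveUpD _ _ _ _ hu2
        exact ⟨hvE.trans (J2 J (by omega) rfl), hdE⟩
    intro u hu
    refine ⟨?_, ?_, ?_⟩
    · exact (Hrow2 u (by omega)).trans (J2 J (by omega) rfl)
    · exact ((VD2 u (by omega)).1).trans (J2 J (by omega) rfl)
    · exact (VD2 u (by omega)).2
/-- prefix sums of the bottom row of `A`. -/
noncomputable def JofA (n : ℕ) (A : Set TEdge) (k : ℕ) : ZMod 2 :=
  if k ≤ n then ∑ x ∈ Finset.Icc 1 k, ind A (hE x 1) else 0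

lemma JofA_zero (n : ℕ) (A : Set TEdge) : JofA n A 0 = 0 := by
  simp [JofA]

lemma JofA_gt {n k : ℕ} (A : Set TEdge) (h : n < k) : JofA n A k = 0 := by
  simp [JofA, Nat.not_le.2 h]

lemma zFlip : ∀ a b c : ZMod 2, a = b + c → c = a + b := by decide
lemma zSolveCorner : ∀ p q s : ZMod 2, (p+q)+0+0+0+(q+s)+0 = 0 → p = s := by decide
lemma zSolveRight : ∀ P p q r s : ZMod 2,
    (P+p)+0+(P+q)+0+(p+r)+(s+q) = 0 → r = s := by decide

lemma JofA_bot {n : ℕ} (A : Set TEdge) :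
    ∀ x, 1 ≤ x → x ≤ n → ind A (hE x 1) = JofA n A x + JofA n A (x-1) := by
  intro x hx hxn
  obtain ⟨w, rfl⟩ : ∃ w, x = w + 1 := ⟨x - 1, by omega⟩
  have hs : JofA n A (w+1) = JofA n A w + ind A (hE (w+1) 1) := by
    unfold JofA
    rw [if_pos hxn, if_pos (by omega), Finset.sum_Icc_succ_top (by omega)]
  have : ind A (hE (w+1) 1) = JofA n A (w+1) + JofA n A w := zFlip _ _ _ hs
  exact this.trans (J2 (JofA n A) rfl (by omega))

/-- master lemma: every totally even set is `solJ` of its bottom prefix sums,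
and those prefix sums are symmetric. -/
lemma totallyEven_spec {n : ℕ} {A : Set TEdge} (hA : TotallyEven n A) :
    A = solJ n (JofA n A) ∧ (∀ k, k ≤ n → JofA n A k = JofA n A (n - k)) := by
  obtain ⟨hsub, hvert, hup, hdown⟩ := (totallyEven_iff A).1 hA
  set J := JofA n A with hJdef
  have rows := rows_lemma hsub hvert hup hdown J (JofA_bot A)
  have hJ0 : J 0 = 0 := JofA_zero n A
  -- J n = 0
  have hJn : J n = 0 := by
    rcases Nat.eq_zero_or_pos n with rfl | hn
    · exact hJ0
    · obtain ⟨m, rfl⟩ : ∃ m, n = m + 1 := ⟨n - 1, by omega⟩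
      have hv := hvert (m+2) 1 (by omega) le_rfl (by omega)
      simp only [vSum] at hv
      have r0 := rows 0 m (by omega)
      rw [show (0:ℕ)+1 = 1 from rfl] at r0
      have t1 : ind A (hE (m+2-1) 1) = J (m+1) + J m := by
        rw [show m+2-1 = m+1 from by omega]
        exact r0.1.trans (J2 J (by omega) rfl)
      have t2 : ind A (hE (m+2) 1) = 0 := ind_invalid_hE hsub (by omega)
      have t3 : ind A (vE (m+2) (1-1)) = 0 := ind_invalid_vE hsub (by omega)
      have t4 : ind A (vE (m+2) 1) = 0 := ind_invalid_vE hsub (by omega)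
      have t5 : ind A (dE (m+2-1) 1) = J m + J 0 := by
        rw [show m+2-1 = m+1 from by omega]
        exact r0.2.2.trans (J2 J rfl (by omega))
      have t6 : ind A (dE (m+2) (1-1)) = 0 := ind_invalid_dE hsub (by omega)
      rw [t1, t2, t3, t4, t5, t6] at hv
      rw [zSolveCorner _ _ _ hv, hJ0]
  refine ⟨?_, ?_⟩
  · -- A = solJ n J
    ext e
    constructor
    · intro he
      obtain ⟨x, y, hx, hy, hxy, hc⟩ := isEdge_cases (hsub e he)
      have hr := rows (y-1) (x-1) (by omega)
      rw [show x-1+1 = x from by omega, show y-1+1 = y from by omega] at hr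
      rcases hc with rfl | rfl | rfl
      · exact ⟨x, y, hx, hy, hxy, Or.inl ⟨rfl,
          ((J2 J (show x+y-1 = (x-1)+(y-1)+1 from by omega) rfl).trans
            (hr.1.symm.trans (ind_eq_one he)))⟩⟩
      · exact ⟨x, y, hx, hy, hxy, Or.inr (Or.inl ⟨rfl,
          ((J2 J (show x+y-1 = (x-1)+(y-1)+1 from by omega) rfl).trans
            (hr.2.1.symm.trans (ind_eq_one he)))⟩)⟩
      · exact ⟨x, y, hx, hy, hxy, Or.inr (Or.inr ⟨rfl,
          (hr.2.2.symm.trans (ind_eq_one he))⟩)⟩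
    · rintro ⟨x, y, hx, hy, hxy, hc⟩
      have hr := rows (y-1) (x-1) (by omega)
      rw [show x-1+1 = x from by omega, show y-1+1 = y from by omega] at hr
      rcases hc with ⟨rfl, hf⟩ | ⟨rfl, hf⟩ | ⟨rfl, hf⟩
      · exact mem_of_ind_eq_one (hr.1.trans
          ((J2 J (show (x-1)+(y-1)+1 = x+y-1 from by omega) rfl).trans hf))
      · exact mem_of_ind_eq_one (hr.2.1.trans
          ((J2 J (show (x-1)+(y-1)+1 = x+y-1 from by omega) rfl).trans hf))
      · exact mem_of_ind_eq_one (hr.2.2.trans hf)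
  · -- symmetry
    intro k hk
    rcases Nat.eq_zero_or_pos k with rfl | hk1
    · rw [Nat.sub_zero, hJ0, hJn]
    rcases Nat.eq_or_lt_of_le hk with rfl | hkn
    · rw [Nat.sub_self, hJ0, hJn]
    -- 1 ≤ k ≤ n-1
    obtain ⟨j, rfl⟩ : ∃ j, k = j + 1 := ⟨k - 1, by omega⟩
    obtain ⟨m, rfl⟩ : ∃ m, n = j + m + 2 := ⟨n - j - 2, by omega⟩
    have hv := hvert (m+2) (j+2) (by omega) (by omega) (by omega)
    simp only [vSum] at hv
    have r1 := rows (j+1) m (by omega)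
    have r2 := rows j (m+1) (by omega)
    have t1 : ind A (hE (m+2-1) (j+2)) = J (m+j+2) + J m := by
      rw [show m+2-1 = m+1 from by omega]
      exact r1.1.trans (J2 J (by omega) rfl)
    have t2 : ind A (hE (m+2) (j+2)) = 0 := ind_invalid_hE hsub (by omega)
    have t3 : ind A (vE (m+2) (j+2-1)) = J (m+j+2) + J j := by
      rw [show j+2-1 = j+1 from by omega]
      exact r2.2.1.trans (J2 J (by omega) rfl)
    have t4 : ind A (vE (m+2) (j+2)) = 0 := ind_invalid_vE hsub (by omega)
    have t5 : ind A (dE (m+2-1) (j+2)) = J m + J (j+1) := by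
      rw [show m+2-1 = m+1 from by omega]
      exact r1.2.2
    have t6 : ind A (dE (m+2) (j+2-1)) = J (m+1) + J j := by
      rw [show j+2-1 = j+1 from by omega]
      exact r2.2.2
    rw [t1, t2, t3, t4, t5, t6] at hv
    have := zSolveRight _ _ _ _ _ hv
    exact this.trans (congrArg J (by omega))
lemma zTel : ∀ a b : ZMod 2, a + (b + a) = b := by decide

/-- extension of a tuple on `{1,…,⌊n/2⌋}` to `ℕ`. -/
noncomputable def gExt (n : ℕ) (g : Fin (n/2) → ZMod 2) (j : ℕ) : ZMod 2 :=
  if h : 1 ≤ j ∧ j ≤ n/2 then g ⟨j - 1, by omega⟩ else 0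

/-- the symmetric prefix-sum function built from a tuple. -/
noncomputable def Jg (n : ℕ) (g : Fin (n/2) → ZMod 2) (k : ℕ) : ZMod 2 :=
  if k ≤ n then gExt n g (min k (n - k)) else 0

lemma Jg_zero (n : ℕ) (g : Fin (n/2) → ZMod 2) : Jg n g 0 = 0 := by
  simp [Jg, gExt]

lemma Jg_symm (n : ℕ) (g : Fin (n/2) → ZMod 2) : ∀ k, k ≤ n → Jg n g k = Jg n g (n - k) := by
  intro k hk
  unfold Jg
  rw [if_pos hk, if_pos (by omega)]
  exact congrArg (gExt n g) (by omega)

lemma Jg_eval {n : ℕ} (g : Fin (n/2) → ZMod 2) (i : Fin (n/2)) :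
    Jg n g (i.1 + 1) = g i := by
  have hi := i.2
  unfold Jg gExt
  rw [if_pos (by omega), dif_pos (by constructor <;> omega)]
  congr 1
  exact Fin.ext (by simp only []; omega)

lemma JofA_solJ {n : ℕ} (J : ℕ → ZMod 2) (hJ0 : J 0 = 0) :
    ∀ k, k ≤ n → JofA n (solJ n J) k = J k := by
  intro k
  induction k with
  | zero => intro _; rw [JofA_zero, hJ0]
  | succ w IH =>
    intro hk
    have hs : JofA n (solJ n J) (w+1) =
        JofA n (solJ n J) w + ind (solJ n J) (hE (w+1) 1) := by
      unfold JofA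
      rw [if_pos hk, if_pos (by omega), Finset.sum_Icc_succ_top (by omega)]
    rw [hs, IH (by omega), ind_solJ_hE J (by omega) le_rfl (by omega)]
    rw [show w+1+1-1 = w+1 from by omega, show w+1-1 = w from by omega]
    exact zTel _ _

lemma solJ_congr {n : ℕ} {J J' : ℕ → ZMod 2} (h : ∀ k, k ≤ n → J k = J' k) :
    solJ n J = solJ n J' := by
  ext e
  constructor <;> rintro ⟨x, y, hx, hy, hxy, hc⟩ <;> refine ⟨x, y, hx, hy, hxy, ?_⟩
  · rcases hc with ⟨he, hf⟩ | ⟨he, hf⟩ | ⟨he, hf⟩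
    · exact Or.inl ⟨he, by rw [← h _ (by omega), ← h _ (by omega)]; exact hf⟩
    · exact Or.inr (Or.inl ⟨he, by rw [← h _ (by omega), ← h _ (by omega)]; exact hf⟩)
    · exact Or.inr (Or.inr ⟨he, by rw [← h _ (by omega), ← h _ (by omega)]; exact hf⟩)
  · rcases hc with ⟨he, hf⟩ | ⟨he, hf⟩ | ⟨he, hf⟩
    · exact Or.inl ⟨he, by rw [h _ (by omega), h _ (by omega)]; exact hf⟩
    · exact Or.inr (Or.inl ⟨he, by rw [h _ (by omega), h _ (by omega)]; exact hf⟩)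
    · exact Or.inr (Or.inr ⟨he, by rw [h _ (by omega), h _ (by omega)]; exact hf⟩)

/-- the bijection from tuples to totally even sets. -/
noncomputable def FF (n : ℕ) (g : Fin (n/2) → ZMod 2) :
    {A : Set TEdge | TotallyEven n A} :=
  ⟨solJ n (Jg n g), solJ_totallyEven (Jg n g) (Jg_zero n g) (Jg_symm n g)⟩

lemma FF_bijective (n : ℕ) : Function.Bijective (FF n) := by
  constructor
  · intro g1 g2 h
    have hsol : solJ n (Jg n g1) = solJ n (Jg n g2) := congrArg Subtype.val h
    funext i
    have hi := i.2
    have h1 := JofA_solJ (n := n) (Jg n g1) (Jg_zero n g1) (i.1+1) (by omega)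
    have h2 := JofA_solJ (n := n) (Jg n g2) (Jg_zero n g2) (i.1+1) (by omega)
    rw [← Jg_eval g1 i, ← Jg_eval g2 i, ← h1, ← h2, hsol]
  · rintro ⟨A, hA⟩
    have hA' : TotallyEven n A := hA
    obtain ⟨hAeq, hsym⟩ := totallyEven_spec hA'
    refine ⟨fun i => JofA n A (i.1 + 1), ?_⟩
    have hJ0 : JofA n A 0 = 0 := JofA_zero n A
    apply Subtype.ext
    show solJ n (Jg n (fun i => JofA n A (i.1 + 1))) = A
    refine Eq.trans (solJ_congr ?_) hAeq.symm
    intro k hk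
    unfold Jg gExt
    rw [if_pos hk]
    set m := min k (n - k) with hm
    by_cases h1 : 1 ≤ m ∧ m ≤ n / 2
    · rw [dif_pos h1]
      show JofA n A (m - 1 + 1) = JofA n A k
      have : JofA n A (m - 1 + 1) = JofA n A m := congrArg (JofA n A) (by omega)
      rw [this]
      rcases (show m = k ∨ m = n - k from by omega) with hmk | hmk
      · rw [hmk]
      · rw [hmk, ← hsym k hk]
    · rw [dif_neg h1]
      have hm2 : m ≤ n / 2 := by omega
      have hm0 : m = 0 := by omega
      have : k = 0 ∨ k = n := by omega
      rcases this with rfl | hkn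
      · rw [hJ0]
      · have hn0 : JofA n A n = 0 := by
          rw [hsym n le_rfl, Nat.sub_self]; exact hJ0
        rw [hkn, hn0]

/-- `Tₙ` has exactly `2 ^ ⌊n/2⌋` totally even subsets (equivalently, the totally even
subsets form an `𝔽₂`-vector space of dimension `⌊n/2⌋`). -/
theorem card_totallyEven_Tn (n : ℕ) :
    Set.ncard {A : Set TEdge | TotallyEven n A} = 2 ^ (n / 2) := by
  have h1 : Nat.card (Fin (n/2) → ZMod 2) = Nat.card {A : Set TEdge | TotallyEven n A} :=
    Nat.card_eq_of_bijective (FF n) (FF_bijective n)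
  rw [← Nat.card_coe_set_eq, ← h1, Nat.card_eq_fintype_card,
    Fintype.card_fun, ZMod.card, Fintype.card_fin]
end

section
/- For each i with 1 ≤ i ≤ ⌊n/2⌋, there exists a totally even subset A of the edges of T_n such that {(i,1),(i+1,1)} ∈ A and for all i' ≠ i with 1 ≤ i' ≤ ⌊n/2⌋, the edge {(i',1),(i'+1,1)} is not in A. -/
/-!
Give the number `k` the label `φ k ∈ ZMod 2`, the indicator of `[i, n - i]`, and let `A` consist of
the edges whose two ends are labelled differently in the up-triangle containing the edge (see
`cutSet`). Counted modulo 2, such an edge contributes the sum of the labels of its ends, so the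
contributions around a face cancel. At a vertex, the two edges lying in a common up-triangle
contribute the sum of the labels of that triangle's other two corners; for the vertex
`(a + 1, b + 1)` these are `φ a + φ b`, `φ (a + b) + φ b` and `φ (a + b) + φ a`, which add up to
`0`, and each of them vanishes when its triangle is missing at the boundary of `Tₙ` (on the top
side because `φ (n - k) = φ k`). Along the bottom side `φ` jumps only at `i` and `n + 1 - i`, so
these are the only bottom edges in `A`.
-/

namespace TriangularGrid

variable {n : ℕ}

lemma isUpFace_iff {x y : ℕ} : IsUpFace n x y ↔ 1 ≤ x ∧ 1 ≤ y ∧ x + y ≤ n + 1 := by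
  simp only [IsUpFace, IsVertex]; omega

instance (n x y : ℕ) : Decidable (IsUpFace n x y) :=
  decidable_of_iff _ isUpFace_iff.symm

lemma isDownFace_iff {x y : ℕ} : IsDownFace n x y ↔ 1 ≤ x ∧ 1 ≤ y ∧ x + y ≤ n := by
  simp only [IsDownFace, IsVertex]; omega

/-- The up-triangle at `(x, y)` labels its corners `(x, y)`, `(x + 1, y)`, `(x, y + 1)` by
`φ (x + y - 1)`, `φ (x - 1)`, `φ (y - 1)`; `cutSet n φ` consists of the edges of up-triangles of
`Tₙ` whose two ends carry different labels. -/
def cutSet (n : ℕ) (φ : ℕ → ZMod 2) : Set TEdge :=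
  {e | ∃ x y, IsUpFace n x y ∧
    (e = s((x, y), (x + 1, y)) ∧ φ (x + y - 1) ≠ φ (x - 1) ∨
     e = s((x, y), (x, y + 1)) ∧ φ (x + y - 1) ≠ φ (y - 1) ∨
     e = s((x + 1, y), (x, y + 1)) ∧ φ (x - 1) ≠ φ (y - 1))}

variable {φ : ℕ → ZMod 2}

lemma mem_cutSet_horizontal {x y : ℕ} :
    s((x, y), (x + 1, y)) ∈ cutSet n φ ↔ IsUpFace n x y ∧ φ (x + y - 1) ≠ φ (x - 1) := by
  refine ⟨?_, fun ⟨hf, hφ⟩ => ⟨x, y, hf, .inl ⟨rfl, hφ⟩⟩⟩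
  rintro ⟨a, b, hf, ⟨he, hφ⟩ | ⟨he, -⟩ | ⟨he, -⟩⟩ <;>
    simp only [Sym2.eq_iff, Prod.mk.injEq] at he
  · obtain ⟨rfl, rfl⟩ : x = a ∧ y = b := by omega
    exact ⟨hf, hφ⟩
  all_goals omega

lemma mem_cutSet_vertical {x y : ℕ} :
    s((x, y), (x, y + 1)) ∈ cutSet n φ ↔ IsUpFace n x y ∧ φ (x + y - 1) ≠ φ (y - 1) := by
  refine ⟨?_, fun ⟨hf, hφ⟩ => ⟨x, y, hf, .inr <| .inl ⟨rfl, hφ⟩⟩⟩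
  rintro ⟨a, b, hf, ⟨he, -⟩ | ⟨he, hφ⟩ | ⟨he, -⟩⟩ <;>
    simp only [Sym2.eq_iff, Prod.mk.injEq] at he
  · omega
  · obtain ⟨rfl, rfl⟩ : x = a ∧ y = b := by omega
    exact ⟨hf, hφ⟩
  · omega

lemma mem_cutSet_diagonal {x y : ℕ} :
    s((x + 1, y), (x, y + 1)) ∈ cutSet n φ ↔ IsUpFace n x y ∧ φ (x - 1) ≠ φ (y - 1) := by
  refine ⟨?_, fun ⟨hf, hφ⟩ => ⟨x, y, hf, .inr <| .inr ⟨rfl, hφ⟩⟩⟩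
  rintro ⟨a, b, hf, ⟨he, -⟩ | ⟨he, -⟩ | ⟨he, hφ⟩⟩ <;>
    simp only [Sym2.eq_iff, Prod.mk.injEq] at he
  · omega
  · omega
  · obtain ⟨rfl, rfl⟩ : x = a ∧ y = b := by omega
    exact ⟨hf, hφ⟩

lemma isEdge_of_mem_cutSet {e : TEdge} (he : e ∈ cutSet n φ) : IsEdge n e := by
  obtain ⟨x, y, hf, ⟨rfl, -⟩ | ⟨rfl, -⟩ | ⟨rfl, -⟩⟩ := he <;> refine ⟨x, y, hf.1, ?_⟩
  · exact .inl ⟨rfl, hf.2.1⟩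
  · exact .inr <| .inl ⟨rfl, hf.2.2⟩
  · exact .inr <| .inr ⟨rfl, hf.2⟩

open Classical in
lemma ncard_inter_eq_countP {α : Type*} (A : Set α) {l : List α} (hl : l.Nodup) :
    (A ∩ {x | x ∈ l}).ncard = l.countP (· ∈ A) := by
  rw [List.countP_eq_length_filter, ← List.toFinset_card_of_nodup (hl.filter _),
    ← Set.ncard_coe_finset]
  congr 1
  ext
  simp [and_comm]

/-- Stated for arbitrary `Decidable` instances, so that it also rewrites the classical ones. -/
lemma natCast_ite_and_ne {P : Prop} [Decidable P] {u v : ZMod 2} [Decidable (P ∧ u ≠ v)] :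
    ((if P ∧ u ≠ v then 1 else 0 : ℕ) : ZMod 2) = if P then u + v else 0 := by
  have key : ∀ u v : ZMod 2, u + v = if u = v then 0 else 1 := by decide
  split_ifs <;> grind

lemma even_ncard_cutSet_inter_upFace {x y : ℕ} (hf : IsUpFace n x y) :
    Even (cutSet n φ ∩ upFace x y).ncard := by
  have hl : upFace x y = {e | e ∈ [s((x, y), (x + 1, y)), s((x, y), (x, y + 1)),
      s((x + 1, y), (x, y + 1))]} := by
    ext; simp [upFace]
  rw [hl, ncard_inter_eq_countP _ (by simp), ← ZMod.natCast_eq_zero_iff_even]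
  simp only [List.countP_cons, List.countP_nil, decide_eq_true_eq, mem_cutSet_horizontal,
    mem_cutSet_vertical, mem_cutSet_diagonal, hf, Nat.cast_add, Nat.cast_zero,
    natCast_ite_and_ne, if_true]
  grind

lemma even_ncard_cutSet_inter_downFace {x y : ℕ} (hf : IsDownFace n x y) :
    Even (cutSet n φ ∩ downFace x y).ncard := by
  have hl : downFace x y = {e | e ∈ [s((x + 1, y), (x, y + 1)), s((x + 1, y), (x + 1, y + 1)),
      s((x, y + 1), (x + 1, y + 1))]} := by
    ext; simp [downFace]
  obtain ⟨hx, hy, hxy⟩ := isDownFace_iff.mp hf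
  have h₁ : IsUpFace n x y := isUpFace_iff.mpr (by omega)
  have h₂ : IsUpFace n (x + 1) y := isUpFace_iff.mpr (by omega)
  have h₃ : IsUpFace n x (y + 1) := isUpFace_iff.mpr (by omega)
  rw [hl, ncard_inter_eq_countP _ (by simp), ← ZMod.natCast_eq_zero_iff_even]
  simp only [List.countP_cons, List.countP_nil, decide_eq_true_eq, mem_cutSet_horizontal,
    mem_cutSet_vertical, mem_cutSet_diagonal, h₁, h₂, h₃, Nat.cast_add, Nat.cast_zero,
    natCast_ite_and_ne, if_true]
  grind

/-- The edges of the triangular lattice at `(a + 1, b + 1)`; the shift avoids truncated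
subtraction. -/
def edgesAt (a b : ℕ) : List TEdge :=
  [s((a, b + 1), (a + 1, b + 1)), s((a + 1, b + 1), (a + 1 + 1, b + 1)),
   s((a + 1, b), (a + 1, b + 1)), s((a + 1, b + 1), (a + 1, b + 1 + 1)),
   s((a + 1, b + 1), (a, b + 1 + 1)), s((a + 1 + 1, b), (a + 1, b + 1))]

lemma mem_edgesAt_of_isEdge {a b : ℕ} {e : TEdge} (he : IsEdge n e) (hp : (a + 1, b + 1) ∈ e) :
    e ∈ edgesAt a b := by
  obtain ⟨x, y, -, ⟨rfl, -⟩ | ⟨rfl, -⟩ | ⟨rfl, -, -⟩⟩ := he <;>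
    simp only [Sym2.mem_iff, Prod.mk.injEq, add_left_inj] at hp <;>
    obtain ⟨rfl, rfl⟩ | ⟨rfl, rfl⟩ := hp <;> simp [edgesAt]

lemma mem_of_mem_edgesAt {a b : ℕ} {e : TEdge} (he : e ∈ edgesAt a b) : (a + 1, b + 1) ∈ e := by
  simp only [edgesAt, List.mem_cons, List.not_mem_nil, or_false] at he
  rcases he with rfl | rfl | rfl | rfl | rfl | rfl <;> simp

lemma incidence_eq_inter_edgesAt {A : Set TEdge} (hA : ∀ e ∈ A, IsEdge n e) (a b : ℕ) :
    {e ∈ A | (a + 1, b + 1) ∈ e} = A ∩ {e | e ∈ edgesAt a b} :=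
  Set.ext fun _ => ⟨fun ⟨he, hp⟩ => ⟨he, mem_edgesAt_of_isEdge (hA _ he) hp⟩,
    fun ⟨he, hs⟩ => ⟨he, mem_of_mem_edgesAt hs⟩⟩

lemma even_ncard_cutSet_incidence (hφ : ∀ k ≤ n, φ (n - k) = φ k) {a b : ℕ} (hab : a + b ≤ n) :
    Even {e ∈ cutSet n φ | (a + 1, b + 1) ∈ e}.ncard := by
  rw [incidence_eq_inter_edgesAt (fun _ => isEdge_of_mem_cutSet),
    ncard_inter_eq_countP _ (by simp [edgesAt]; omega), ← ZMod.natCast_eq_zero_iff_even]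
  simp only [edgesAt, List.countP_cons, List.countP_nil, decide_eq_true_eq, mem_cutSet_horizontal,
    mem_cutSet_vertical, mem_cutSet_diagonal, Nat.cast_add, Nat.cast_zero,
    natCast_ite_and_ne, add_tsub_cancel_right, Nat.add_succ_sub_one,
    Nat.succ_add_sub_one]
  have hright : (if IsUpFace n (a + 1) (b + 1) then φ (a + 1 + b) + φ a else 0) +
      (if IsUpFace n (a + 1) (b + 1) then φ (a + 1 + b) + φ b else 0) = φ a + φ b := by
    split_ifs with h
    · grind
    · obtain rfl : n = a + b := by rw [isUpFace_iff] at h; omega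
      rw [← hφ a (by omega), Nat.add_sub_cancel_left]
      grind
  have hleft : (if IsUpFace n a (b + 1) then φ (a + b) + φ (a - 1) else 0) +
      (if IsUpFace n a (b + 1) then φ (a - 1) + φ b else 0) = φ (a + b) + φ b := by
    split_ifs with h
    · grind
    · obtain rfl : a = 0 := by rw [isUpFace_iff] at h; omega
      grind
  have hdown : (if IsUpFace n (a + 1) b then φ (a + b) + φ (b - 1) else 0) +
      (if IsUpFace n (a + 1) b then φ a + φ (b - 1) else 0) = φ (a + b) + φ a := by
    split_ifs with h
    · grind
    · obtain rfl : b = 0 := by rw [isUpFace_iff] at h; omega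
      grind
  grind

theorem totallyEven_cutSet (hφ : ∀ k ≤ n, φ (n - k) = φ k) : TotallyEven n (cutSet n φ) := by
  refine ⟨fun _ => isEdge_of_mem_cutSet, ?_, fun _ _ => even_ncard_cutSet_inter_upFace,
    fun _ _ => even_ncard_cutSet_inter_downFace⟩
  rintro ⟨x, y⟩ ⟨hy, -, hx, hxy⟩
  obtain ⟨a, rfl⟩ := Nat.exists_eq_add_of_le' hx
  obtain ⟨b, rfl⟩ := Nat.exists_eq_add_of_le' hy
  exact even_ncard_cutSet_incidence hφ (by omega)

lemma indicator_Icc_sub_symm {M : Type*} [Zero M] [One M] {i k : ℕ} (hk : k ≤ n) :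
    (Set.Icc i (n - i)).indicator (1 : ℕ → M) (n - k) = (Set.Icc i (n - i)).indicator 1 k := by
  have hmem : n - k ∈ Set.Icc i (n - i) ↔ k ∈ Set.Icc i (n - i) := by
    simp only [Set.mem_Icc]; omega
  simp only [Set.indicator_apply, hmem, Pi.one_apply]

lemma bottom_mem_cutSet_indicator_iff {i x : ℕ} (hi : 2 * i ≤ n) (hx : 1 ≤ x) (hxn : x ≤ n) :
    s((x, 1), (x + 1, 1)) ∈ cutSet n ((Set.Icc i (n - i)).indicator 1) ↔
      x = i ∨ x = n + 1 - i := by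
  rw [mem_cutSet_horizontal, isUpFace_iff]
  simp only [Set.indicator_apply, Set.mem_Icc, Pi.one_apply]
  split_ifs <;> simp <;> omega

end TriangularGrid

/-- For each `1 ≤ i ≤ ⌊n/2⌋` there is a totally even subset of `Tₙ` containing the bottom
edge `{(i,1),(i+1,1)}` and no other bottom edge `{(i',1),(i'+1,1)}` with `1 ≤ i' ≤ ⌊n/2⌋`. -/
theorem exists_basis_totallyEven (n i : ℕ) (hi1 : 1 ≤ i) (hi2 : i ≤ n / 2) :
    ∃ A : Set TEdge, TotallyEven n A ∧ s(((i : ℕ), 1), (i + 1, 1)) ∈ A ∧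
      ∀ i' : ℕ, 1 ≤ i' → i' ≤ n / 2 → i' ≠ i →
        s(((i' : ℕ), 1), (i' + 1, 1)) ∉ A := by
  have hi : 2 * i ≤ n := by omega
  refine ⟨TriangularGrid.cutSet n ((Set.Icc i (n - i)).indicator 1),
    TriangularGrid.totallyEven_cutSet fun k hk => TriangularGrid.indicator_Icc_sub_symm hk,
    (TriangularGrid.bottom_mem_cutSet_indicator_iff hi hi1 (by omega)).mpr (.inl rfl), ?_⟩
  intro i' hi'1 hi'2 hi'i hmem
  rcases (TriangularGrid.bottom_mem_cutSet_indicator_iff hi hi'1 (by omega)).mp hmem with h | h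
  · exact hi'i h
  · omega
end
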